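/- The set of positive integers n with G(n) = n(n+2)/3 is exactly the set {2^r - 1 : r ≥ 1}. -/

import Mathlib

open Finset

/-- The largest odd divisor of `k`. -/
def oddPart (k : ℕ) : ℕ := ordCompl[2] k

/-- `V n = ∑_{k=1}^n α(k)/k` as a rational number. -/
def V (n : ℕ) : ℚ := ∑ k ∈ Finset.Icc 1 n, (oddPart k : ℚ) / k

/-- `v n = V n - 2n/3`. -/
def v (n : ℕ) : ℚ := V n - 2 * n / 3

/-- `U n = ∑_{k=1}^n α(k)`. -/
def U (n : ℕ) : ℕ := ∑ k ∈ Finset.Icc 1 n, oddPart k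

/-- `G n = ∑_{k=1}^n (n+1-k)·α(k)/k` as a rational number. -/
def G (n : ℕ) : ℚ := ∑ k ∈ Finset.Icc 1 n, ((n : ℚ) + 1 - k) * (oddPart k : ℚ) / k

/-- `g n = n(n+2)/3 - G n`. -/
def g (n : ℕ) : ℚ := n * (n + 2) / 3 - G n

/-! Since `α(2k) = α(k)` and `α(2k+1) = 2k+1`, the normalised partial sums `v = V - 2n/3` of
`α(k)/k` obey `v(2n) = v(n)/2` and `v(2n+1) = v(n)/2 + 1/3`, so `v > 0` on positive integers.
As `G` is the running sum of `V`, the defect `g(n) = n(n+2)/3 - G(n)` then obeys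
`g(2n) = g(n) + v(n)/2` and `g(2n+1) = g(n)`. Hence `g ≥ 0`, and `g(n) = 0` exactly when every
binary digit of `n` is a one. -/

lemma oddPart_two_mul (k : ℕ) : oddPart (2 * k) = oddPart k := by
  simpa only [oddPart, pow_one] using Nat.ordCompl_self_pow_mul k 1 Nat.prime_two

lemma oddPart_two_mul_add_one (k : ℕ) : oddPart (2 * k + 1) = 2 * k + 1 :=
  (Nat.ordCompl_eq_self_iff_zero_or_not_dvd _ Nat.prime_two).2 (Or.inr (by omega))

lemma V_succ (n : ℕ) : V (n + 1) = V n + oddPart (n + 1) / (n + 1 : ℕ) :=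
  Finset.sum_Icc_succ_top (by omega) _

lemma V_two_mul_add_one (n : ℕ) : V (2 * n + 1) = V (2 * n) + 1 := by
  rw [V_succ, oddPart_two_mul_add_one, div_self (by positivity)]

lemma V_two_mul (n : ℕ) : V (2 * n) = n + V n / 2 := by
  induction n with
  | zero => simp [V]
  | succ n ih =>
    rw [show 2 * (n + 1) = 2 * n + 1 + 1 by ring, V_succ, V_two_mul_add_one, ih,
      show 2 * n + 1 + 1 = 2 * (n + 1) by ring, oddPart_two_mul, V_succ]
    push_cast
    field_simp
    ring

lemma v_two_mul (n : ℕ) : v (2 * n) = v n / 2 := by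
  rw [v, v, V_two_mul]
  push_cast
  ring

lemma v_two_mul_add_one (n : ℕ) : v (2 * n + 1) = v n / 2 + 1 / 3 := by
  rw [v, v, V_two_mul_add_one, V_two_mul]
  push_cast
  ring

lemma v_nonneg (n : ℕ) : 0 ≤ v n := by
  induction n using Nat.evenOddRec with
  | h0 => simp [v, V]
  | h_even n ih => rw [v_two_mul]; positivity
  | h_odd n ih => rw [v_two_mul_add_one]; positivity

lemma v_pos {n : ℕ} (hn : 0 < n) : 0 < v n := by
  induction n using Nat.evenOddRec with
  | h0 => omega
  | h_even n ih => rw [v_two_mul]; have := ih (by omega); positivity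
  | h_odd n _ => rw [v_two_mul_add_one]; have := v_nonneg n; positivity

lemma G_succ (n : ℕ) : G (n + 1) = G n + V (n + 1) := by
  have hsplit (k : ℕ) : (((n + 1 : ℕ) : ℚ) + 1 - k) * oddPart k / k =
      ((n : ℚ) + 1 - k) * oddPart k / k + oddPart k / k := by
    push_cast
    ring
  rw [G, Finset.sum_congr rfl fun k _ => hsplit k, Finset.sum_add_distrib, ← V,
    Finset.sum_Icc_succ_top (by omega), G]
  simp

lemma g_succ (n : ℕ) : g (n + 1) = g n + 1 / 3 - v (n + 1) := by
  rw [g, g, v, G_succ]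
  push_cast
  ring

lemma g_two_mul (n : ℕ) : g (2 * n) = g n + v n / 2 := by
  induction n with
  | zero => simp [g, G, v, V]
  | succ n ih =>
    rw [show 2 * (n + 1) = 2 * n + 1 + 1 by ring, g_succ, g_succ, ih,
      show 2 * n + 1 + 1 = 2 * (n + 1) by ring, v_two_mul, v_two_mul_add_one, g_succ]
    ring

lemma g_two_mul_add_one (n : ℕ) : g (2 * n + 1) = g n := by
  rw [g_succ, g_two_mul, v_two_mul_add_one]
  ring

lemma g_nonneg (n : ℕ) : 0 ≤ g n := by
  induction n using Nat.evenOddRec with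
  | h0 => simp [g, G]
  | h_even n ih => rw [g_two_mul]; have := v_nonneg n; positivity
  | h_odd n ih => rwa [g_two_mul_add_one]

lemma two_mul_two_pow_sub_one_add_one (r : ℕ) : 2 * (2 ^ r - 1) + 1 = 2 ^ (r + 1) - 1 := by
  have := Nat.one_le_two_pow (n := r)
  omega

lemma g_eq_zero_iff (n : ℕ) : g n = 0 ↔ ∃ r, n = 2 ^ r - 1 := by
  constructor
  · induction n using Nat.evenOddRec with
    | h0 => exact fun _ => ⟨0, rfl⟩
    | h_even n _ =>
      intro hg
      obtain rfl | hn := n.eq_zero_or_pos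
      · exact ⟨0, rfl⟩
      · have := v_pos hn
        have := g_nonneg n
        rw [g_two_mul] at hg
        linarith
    | h_odd n ih =>
      intro hg
      obtain ⟨r, rfl⟩ := ih (by rwa [g_two_mul_add_one] at hg)
      exact ⟨r + 1, two_mul_two_pow_sub_one_add_one r⟩
  · rintro ⟨r, rfl⟩
    induction r with
    | zero => simp [g, G]
    | succ r ih => rwa [← two_mul_two_pow_sub_one_add_one, g_two_mul_add_one]

theorem stmt17 :
    {n : ℕ | 0 < n ∧ G n = (n : ℚ) * (n + 2) / 3} =
      {n : ℕ | ∃ r : ℕ, 1 ≤ r ∧ n = 2 ^ r - 1} := by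
  ext n
  have hG : G n = n * (n + 2) / 3 ↔ g n = 0 := by rw [g, sub_eq_zero, eq_comm]
  simp only [Set.mem_ofPred_eq, hG, g_eq_zero_iff]
  constructor
  · rintro ⟨hn, r, rfl⟩
    exact ⟨r, Nat.one_le_iff_ne_zero.2 (by rintro rfl; simp at hn), rfl⟩
  · rintro ⟨r, hr, rfl⟩
    exact ⟨Nat.sub_pos_of_lt (Nat.one_lt_two_pow (by omega)), r, rfl⟩
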